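/- The set A, equipped with the metric d(S, T) = sup_n p_n(S_n − T_n), is not separable: it contains no countable dense subset. -/

import Mathlib

noncomputable section

/-- The operator norm on `M_n(ℂ)` acting on `ℓ²(Fin n)`. -/
def opNorm {n : ℕ} (x : Matrix (Fin n) (Fin n) ℂ) : ℝ :=
  ‖LinearMap.toContinuousLinearMap (Matrix.toEuclideanLin x)‖

/-- The diagonal matrix `d_n` whose `k`-th diagonal entry is `c_n ^ k` (for `1 ≤ k ≤ n`). -/
def dMat (c : ℕ → ℝ) (n : ℕ) : Matrix (Fin n) (Fin n) ℂ :=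
  Matrix.diagonal fun k => ((c n ^ ((k : ℕ) + 1) : ℝ) : ℂ)

/-- The inverse `d_n⁻¹`. -/
def dMatInv (c : ℕ → ℝ) (n : ℕ) : Matrix (Fin n) (Fin n) ℂ :=
  Matrix.diagonal fun k => (((c n ^ ((k : ℕ) + 1))⁻¹ : ℝ) : ℂ)

/-- The norm `p_n(x) = max {‖x‖, ‖d_n x d_n⁻¹‖}`. -/
def pnorm (c : ℕ → ℝ) (n : ℕ) (x : Matrix (Fin n) (Fin n) ℂ) : ℝ :=
  max (opNorm x) (opNorm (dMat c n * x * dMatInv c n))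

/-- The left shift `L_n`: `L_n e_{k+1} = e_k`, `L_n e_1 = 0`. -/
def Lmat (n : ℕ) : Matrix (Fin n) (Fin n) ℂ :=
  Matrix.of fun i j => if (i : ℕ) + 1 = (j : ℕ) then 1 else 0

/-- The integer interval `E_{n,k} = {i ∈ ℕ : n/k ≤ i ≤ 2n/k}`. -/
def Eset (n k : ℕ) : Finset ℕ :=
  (Finset.range (2 * n + 1)).filter fun i => (n : ℝ) / k ≤ i ∧ (i : ℝ) ≤ 2 * n / k

/-- `u_{n,k} = μ_{n,k}⁻¹ ∑_{i ∈ E_{n,k}} L_n^i` if `k ≤ n`, and `u_{n,k} = I_n` if `n < k`. -/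
def umat (n k : ℕ) : Matrix (Fin n) (Fin n) ℂ :=
  if k ≤ n then ((Eset n k).card : ℂ)⁻¹ • ∑ i ∈ Eset n k, Lmat n ^ i else 1

/-- Membership in the algebra `A`: `p(T) < ∞` and
`sup_n p_n(T_n u_{n,k} − T_n) + sup_n p_n(u_{n,k} T_n − T_n) → 0` as `k → ∞`. -/
def memA (c : ℕ → ℝ) (T : ∀ n, Matrix (Fin n) (Fin n) ℂ) : Prop :=
  (∃ M : ℝ, ∀ n, pnorm c n (T n) ≤ M) ∧
  ∀ ε : ℝ, 0 < ε → ∃ K : ℕ, ∀ k, K ≤ k → ∀ n,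
    pnorm c n (T n * umat n k - T n) + pnorm c n (umat n k * T n - T n) ≤ ε

/-- `p(T) = sup_n p_n(T_n)`. -/
def pA (c : ℕ → ℝ) (T : ∀ n, Matrix (Fin n) (Fin n) ℂ) : ℝ :=
  ⨆ n, pnorm c n (T n)

/-- The upper triangular part `Δ̄_U x`. -/
def upperT {n : ℕ} (x : Matrix (Fin n) (Fin n) ℂ) : Matrix (Fin n) (Fin n) ℂ :=
  Matrix.of fun i j => if i ≤ j then x i j else 0

/-- The strictly lower triangular part `Δ_L x`. -/
def lowerT {n : ℕ} (x : Matrix (Fin n) (Fin n) ℂ) : Matrix (Fin n) (Fin n) ℂ :=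
  Matrix.of fun i j => if j < i then x i j else 0

open scoped Matrix.Norms.L2Operator

lemma opNorm_eq {n : ℕ} (x : Matrix (Fin n) (Fin n) ℂ) : opNorm x = ‖x‖ := rfl
lemma pnorm_nonneg (c : ℕ → ℝ) (n : ℕ) (x : Matrix (Fin n) (Fin n) ℂ) :
    0 ≤ pnorm c n x := le_trans (norm_nonneg x) (le_max_left _ _)
lemma pnorm_zero (c : ℕ → ℝ) (n : ℕ) : pnorm c n 0 = 0 := by
  simp [pnorm, opNorm_eq]
lemma pnorm_add_le (c : ℕ → ℝ) (n : ℕ) (x y : Matrix (Fin n) (Fin n) ℂ) :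
    pnorm c n (x + y) ≤ pnorm c n x + pnorm c n y := by
  simp only [pnorm, opNorm_eq, Matrix.mul_add, Matrix.add_mul]
  exact max_le (le_trans (norm_add_le _ _) (add_le_add (le_max_left _ _) (le_max_left _ _)))
    (le_trans (norm_add_le _ _) (add_le_add (le_max_right _ _) (le_max_right _ _)))
lemma pnorm_neg (c : ℕ → ℝ) (n : ℕ) (x : Matrix (Fin n) (Fin n) ℂ) :
    pnorm c n (-x) = pnorm c n x := by
  simp [pnorm, opNorm_eq, Matrix.mul_neg, Matrix.neg_mul]
lemma pnorm_smul (c : ℕ → ℝ) (n : ℕ) (a : ℂ) (x : Matrix (Fin n) (Fin n) ℂ) :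
    pnorm c n (a • x) = ‖a‖ * pnorm c n x := by
  simp only [pnorm, opNorm_eq, Matrix.mul_smul, Matrix.smul_mul, norm_smul]
  rw [← mul_max_of_nonneg _ _ (norm_nonneg a)]
lemma pnorm_sum_le (c : ℕ → ℝ) (n : ℕ) {ι : Type*} (s : Finset ι)
    (f : ι → Matrix (Fin n) (Fin n) ℂ) :
    pnorm c n (∑ i ∈ s, f i) ≤ ∑ i ∈ s, pnorm c n (f i) := by
  classical
  induction s using Finset.induction with
  | empty => simp [pnorm_zero]
  | insert _ _ h ih =>
      rw [Finset.sum_insert h, Finset.sum_insert h]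
      exact le_trans (pnorm_add_le _ _ _ _) (by linarith)
lemma pnorm_sub_triangle (c : ℕ → ℝ) (n : ℕ) (x y z : Matrix (Fin n) (Fin n) ℂ) :
    pnorm c n (x - z) ≤ pnorm c n (x - y) + pnorm c n (y - z) := by
  rw [← sub_add_sub_cancel x y z]; exact pnorm_add_le _ _ _ _
lemma pnorm_sub_comm (c : ℕ → ℝ) (n : ℕ) (x y : Matrix (Fin n) (Fin n) ℂ) :
    pnorm c n (x - y) = pnorm c n (y - x) := by
  rw [← pnorm_neg, neg_sub]
lemma Lpow_apply (n m : ℕ) (i j : Fin n) :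
    (Lmat n ^ m) i j = if (i : ℕ) + m = (j : ℕ) then 1 else 0 := by
  induction m generalizing i j with
  | zero =>
      rw [pow_zero, Matrix.one_apply]
      simp [Fin.ext_iff]
  | succ m ih =>
      rw [pow_succ, Matrix.mul_apply]
      by_cases h : (i : ℕ) + m < n
      · rw [Finset.sum_eq_single (⟨(i : ℕ) + m, h⟩ : Fin n)]
        · rw [ih]
          simp only [Lmat, Matrix.of_apply]
          simp [add_assoc]
        · intro b _ hb
          rw [ih]
          rw [if_neg, zero_mul]
          intro hc
          exact hb (by simp [Fin.ext_iff, ← hc])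
        · simp
      · rw [Finset.sum_eq_zero, eq_comm, if_neg]
        · omega
        · intro b _
          rw [ih, if_neg (by omega), zero_mul]
lemma Lpow_eq_zero (n m : ℕ) (h : n ≤ m) : Lmat n ^ m = 0 := by
  ext i j
  rw [Lpow_apply, if_neg (by omega)]
  rfl
lemma norm_Lpow_le (n m : ℕ) : ‖Lmat n ^ m‖ ≤ 1 := by
  rw [Matrix.l2_opNorm_def]
  refine ContinuousLinearMap.opNorm_le_bound _ zero_le_one fun v => ?_
  rw [one_mul]
  have hu : ∀ a : Fin n,
      ((Matrix.toEuclideanLin (𝕜 := ℂ) (m := Fin n) (n := Fin n)).trans LinearMap.toContinuousLinearMap (Lmat n ^ m) v) a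
        = ∑ b, (Lmat n ^ m) a b * v b := fun a => rfl
  rw [EuclideanSpace.norm_eq, EuclideanSpace.norm_eq]
  apply Real.sqrt_le_sqrt
  have key : ∀ a : Fin n,
      ‖((Matrix.toEuclideanLin (𝕜 := ℂ) (m := Fin n) (n := Fin n)).trans LinearMap.toContinuousLinearMap (Lmat n ^ m) v) a‖ ^ 2
        ≤ ∑ b : Fin n, if (a : ℕ) + m = (b : ℕ) then ‖v b‖ ^ 2 else 0 := by
    intro a
    rw [hu a]
    by_cases h : (a : ℕ) + m < n
    · rw [Finset.sum_eq_single (⟨(a : ℕ) + m, h⟩ : Fin n),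
        Finset.sum_eq_single (⟨(a : ℕ) + m, h⟩ : Fin n)]
      · rw [Lpow_apply, if_pos (by simp), if_pos (by simp), one_mul]
      · intro b _ hb
        rw [if_neg (fun hc => hb (by simp [Fin.ext_iff, ← hc]))]
      · simp
      · intro b _ hb
        rw [Lpow_apply, if_neg (fun hc => hb (by simp [Fin.ext_iff, ← hc])), zero_mul]
      · simp
    · rw [Finset.sum_eq_zero, Finset.sum_eq_zero]
      · simp
      · intro b _
        rw [if_neg (by omega)]
      · intro b _
        rw [Lpow_apply, if_neg (by omega), zero_mul]
  refine le_trans (Finset.sum_le_sum fun a _ => key a) ?_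
  rw [Finset.sum_comm]
  refine Finset.sum_le_sum fun b _ => ?_
  by_cases hmb : m ≤ (b : ℕ)
  · have hlt : (b : ℕ) - m < n := lt_of_le_of_lt (Nat.sub_le _ _) b.isLt
    rw [Finset.sum_eq_single (⟨(b : ℕ) - m, hlt⟩ : Fin n)]
    · rw [if_pos (by simp; omega)]
    · intro a _ ha
      rw [if_neg (fun hc => ha (by simp [Fin.ext_iff]; omega))]
    · simp
  · rw [Finset.sum_eq_zero]
    · positivity
    · intro a _
      rw [if_neg (by omega)]
lemma dconj_Lpow (c : ℕ → ℝ) (n : ℕ) (hc : 0 < c n) (m : ℕ) :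
    dMat c n * (Lmat n ^ m) * dMatInv c n = (((c n ^ m)⁻¹ : ℝ) : ℂ) • Lmat n ^ m := by
  have hc' : c n ≠ 0 := ne_of_gt hc
  ext i j
  simp only [dMat, dMatInv, Matrix.diagonal_mul, Matrix.mul_diagonal, Matrix.smul_apply,
    Lpow_apply, smul_eq_mul]
  split_ifs with h
  · rw [mul_one, mul_one]
    have hcc : (c n : ℂ) ≠ 0 := Complex.ofReal_ne_zero.mpr hc'
    have h2 : (j:ℕ) + 1 = ((i:ℕ) + 1) + m := by omega
    push_cast
    rw [h2]
    rw [pow_add (c n : ℂ) ((i:ℕ)+1) m, mul_inv, ← mul_assoc,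
      mul_inv_cancel₀ (pow_ne_zero _ hcc), one_mul]
  · rw [mul_zero, zero_mul, mul_zero]
lemma pnorm_Lpow_le (c : ℕ → ℝ) (n : ℕ) (hc : 1 < c n) (m : ℕ) :
    pnorm c n (Lmat n ^ m) ≤ 1 := by
  have h0 : (0:ℝ) < c n := lt_trans zero_lt_one hc
  rw [pnorm, dconj_Lpow c n h0 m]
  refine max_le (norm_Lpow_le n m) ?_
  rw [opNorm_eq, norm_smul]
  have h1 : ‖(((c n ^ m)⁻¹ : ℝ) : ℂ)‖ ≤ 1 := by
    rw [Complex.norm_real, Real.norm_eq_abs, abs_of_nonneg (by positivity)]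
    rw [inv_le_one_iff₀]
    right
    exact one_le_pow₀ (le_of_lt hc)
  calc _ ≤ 1 * ‖Lmat n ^ m‖ := by
        apply mul_le_mul_of_nonneg_right h1 (norm_nonneg _)
    _ ≤ 1 := by rw [one_mul]; exact norm_Lpow_le n m
def xseq (n : ℕ) : Matrix (Fin n) (Fin n) ℂ :=
  ((n : ℂ))⁻¹ • ∑ j ∈ Finset.range n, Lmat n ^ j
lemma pnorm_xseq_le (c : ℕ → ℝ) (hone : ∀ n, 1 < c n) (n : ℕ) :
    pnorm c n (xseq n) ≤ 1 := by
  rcases Nat.eq_zero_or_pos n with h | h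
  · subst h
    simp only [xseq, Finset.range_zero, Finset.sum_empty, smul_zero]
    rw [pnorm_zero]
    exact zero_le_one
  · rw [xseq, pnorm_smul]
    calc ‖((n:ℂ))⁻¹‖ * pnorm c n (∑ j ∈ Finset.range n, Lmat n ^ j)
        ≤ (n:ℝ)⁻¹ * ∑ j ∈ Finset.range n, pnorm c n (Lmat n ^ j) := by
          apply mul_le_mul
          · rw [norm_inv, Complex.norm_natCast]
          · exact pnorm_sum_le _ _ _ _
          · exact pnorm_nonneg _ _ _
          · positivity
      _ ≤ (n:ℝ)⁻¹ * ∑ j ∈ Finset.range n, 1 := by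
          apply mul_le_mul_of_nonneg_left _ (by positivity)
          exact Finset.sum_le_sum fun j _ => pnorm_Lpow_le c n (hone n) j
      _ = 1 := by
          rw [Finset.sum_const, Finset.card_range, nsmul_eq_mul, mul_one,
            inv_mul_cancel₀ (show ((n:ℝ)) ≠ 0 from Nat.cast_ne_zero.mpr (by omega))]

-- Eset facts
lemma Eset_nonempty {n k : ℕ} (h2 : 2 ≤ k) (hkn : k ≤ n) : (Eset n k).Nonempty := by
  refine ⟨n / k + 1, ?_⟩
  have hk0 : 0 < k := by omega
  have hd1 : k * (n / k) + n % k = n := Nat.div_add_mod n k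
  have hd2 : n % k < k := Nat.mod_lt n hk0
  have hd3 : k * (n / k) ≤ n := Nat.mul_div_le n k
  have hkR : (0:ℝ) < (k:ℝ) := by positivity
  simp only [Eset, Finset.mem_filter, Finset.mem_range]
  refine ⟨?_, ?_, ?_⟩
  · have : n / k < n := Nat.div_lt_self (by omega) (by omega)
    omega
  · rw [div_le_iff₀ hkR]
    have hnat : n < k * (n / k) + k := by omega
    have hcast : (n:ℝ) < (k:ℝ) * ((n / k : ℕ):ℝ) + k := by exact_mod_cast hnat
    push_cast
    nlinarith
  · rw [le_div_iff₀ hkR]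
    have hnat : k * (n / k) + k ≤ 2 * n := by omega
    have hcast : (k:ℝ) * ((n / k : ℕ):ℝ) + k ≤ 2 * n := by exact_mod_cast hnat
    push_cast
    nlinarith
lemma Eset_mem_bounds {n k i : ℕ} (h2 : 2 ≤ k) (hkn : k ≤ n) (hi : i ∈ Eset n k) :
    1 ≤ i ∧ i ≤ n ∧ (i : ℝ) ≤ 2 * n / k := by
  simp only [Eset, Finset.mem_filter, Finset.mem_range] at hi
  obtain ⟨-, hlo, hhi⟩ := hi
  have hk0 : (0:ℝ) < (k:ℝ) := by positivity
  have hnR : (0:ℝ) < (n:ℝ) := by exact_mod_cast (by omega : 0 < n)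
  have hkR : (2:ℝ) ≤ (k:ℝ) := by exact_mod_cast h2
  refine ⟨?_, ?_, hhi⟩
  · by_contra hi0
    push_neg at hi0
    interval_cases i
    rw [div_le_iff₀ hk0] at hlo
    push_cast at hlo
    linarith
  · have hin : (i:ℝ) ≤ (n:ℝ) := by
      refine le_trans hhi ?_
      rw [div_le_iff₀ hk0]
      nlinarith
    exact_mod_cast hin
lemma Lpow_shift_sum (n i : ℕ) (hi1 : 1 ≤ i) (hin : i ≤ n) :
    (∑ j ∈ Finset.range n, Lmat n ^ j) * Lmat n ^ i - (∑ j ∈ Finset.range n, Lmat n ^ j)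
      = -∑ j ∈ Finset.range i, Lmat n ^ j := by
  rw [Finset.sum_mul]
  have h1 : ∀ j, Lmat n ^ j * Lmat n ^ i = Lmat n ^ (j + i) := fun j => (pow_add _ _ _).symm
  simp_rw [h1]
  have h2 : ∑ j ∈ Finset.range n, Lmat n ^ (j + i)
      = ∑ m ∈ Finset.Ico i (n + i), Lmat n ^ m := by
    rw [Finset.sum_Ico_eq_sum_range]
    simp [add_comm, Nat.add_sub_cancel]
  have h3 : ∑ m ∈ Finset.Ico i (n + i), Lmat n ^ m = ∑ m ∈ Finset.Ico i n, Lmat n ^ m := by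
    rw [← Finset.sum_Ico_consecutive _ hin (Nat.le_add_right n i)]
    have : ∑ m ∈ Finset.Ico n (n + i), Lmat n ^ m = 0 :=
      Finset.sum_eq_zero fun m hm =>
        Lpow_eq_zero n m (Finset.mem_Ico.mp hm).1
    rw [this, add_zero]
  have h4 : ∑ m ∈ Finset.range n, Lmat n ^ m
      = ∑ m ∈ Finset.range i, Lmat n ^ m + ∑ m ∈ Finset.Ico i n, Lmat n ^ m := by
    simp only [Finset.range_eq_Ico]
    exact (Finset.sum_Ico_consecutive _ (Nat.zero_le i) hin).symm
  rw [h2, h3, h4]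
  abel
lemma xseq_umat_comm (n k : ℕ) : umat n k * xseq n = xseq n * umat n k := by
  have hbase : ∀ (s : Finset ℕ) (t : Finset ℕ),
      Commute (∑ j ∈ s, Lmat n ^ j) (∑ i ∈ t, Lmat n ^ i) := by
    intro s t
    refine Commute.sum_left _ _ _ fun j _ => Commute.sum_right _ _ _ fun i _ => ?_
    exact (Commute.refl (Lmat n)).pow_pow j i
  rw [umat]
  split_ifs with h
  · rw [xseq, Matrix.smul_mul, Matrix.mul_smul, Matrix.smul_mul, Matrix.mul_smul,
      smul_smul, smul_smul, mul_comm (((Eset n k).card : ℂ))⁻¹ ((n:ℂ))⁻¹,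
      (hbase (Finset.range n) (Eset n k)).eq]
  · rw [one_mul, mul_one]
lemma key_est (c : ℕ → ℝ) (hone : ∀ n, 1 < c n) {n k : ℕ} (h2 : 2 ≤ k) (hkn : k ≤ n) :
    pnorm c n (xseq n * umat n k - xseq n) ≤ 2 / k := by
  have hn0 : 0 < n := by omega
  have hkR : (0:ℝ) < (k:ℝ) := by positivity
  have hnR : (0:ℝ) < (n:ℝ) := by exact_mod_cast hn0
  set E := Eset n k with hE
  have hEne : E.Nonempty := Eset_nonempty h2 hkn
  have hμ0 : 0 < E.card := Finset.card_pos.mpr hEne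
  have hμR : (0:ℝ) < (E.card:ℝ) := by exact_mod_cast hμ0
  have hμC : ((E.card : ℕ) : ℂ) ≠ 0 := Nat.cast_ne_zero.mpr hμ0.ne'
  set S := ∑ j ∈ Finset.range n, Lmat n ^ j with hS
  have humat : umat n k = ((E.card : ℂ))⁻¹ • ∑ i ∈ E, Lmat n ^ i := by
    rw [umat, if_pos hkn]
  have eq1 : xseq n * umat n k - xseq n
      = (((n:ℂ))⁻¹ * ((E.card : ℂ))⁻¹) • ∑ i ∈ E, (S * Lmat n ^ i - S) := by
    rw [humat, xseq, ← hS]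
    rw [Finset.sum_sub_distrib, ← Finset.mul_sum, Finset.sum_const]
    rw [Matrix.smul_mul, Matrix.mul_smul, smul_smul, smul_sub]
    congr 1
    rw [← Nat.cast_smul_eq_nsmul ℂ, smul_smul, mul_assoc,
      inv_mul_cancel₀ hμC, mul_one]
  rw [eq1, pnorm_smul]
  have hnormsc : ‖((n:ℂ))⁻¹ * ((E.card : ℂ))⁻¹‖ = (n:ℝ)⁻¹ * ((E.card:ℝ))⁻¹ := by
    rw [norm_mul, norm_inv, norm_inv, Complex.norm_natCast, Complex.norm_natCast]
  rw [hnormsc]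
  have hterm : ∀ i ∈ E, pnorm c n (S * Lmat n ^ i - S) ≤ 2 * (n:ℝ) / k := by
    intro i hi
    obtain ⟨hi1, hin, hi2⟩ := Eset_mem_bounds h2 hkn hi
    rw [Lpow_shift_sum n i hi1 hin, pnorm_neg]
    refine le_trans (pnorm_sum_le _ _ _ _) ?_
    refine le_trans (Finset.sum_le_sum fun j _ => pnorm_Lpow_le c n (hone n) j) ?_
    rw [Finset.sum_const, Finset.card_range, nsmul_eq_mul, mul_one]
    exact hi2
  have hsum : pnorm c n (∑ i ∈ E, (S * Lmat n ^ i - S)) ≤ (E.card:ℝ) * (2 * n / k) := by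
    refine le_trans (pnorm_sum_le _ _ _ _) ?_
    refine le_trans (Finset.sum_le_sum hterm) ?_
    rw [Finset.sum_const, nsmul_eq_mul]
  calc (n:ℝ)⁻¹ * ((E.card:ℝ))⁻¹ * pnorm c n (∑ i ∈ E, (S * Lmat n ^ i - S))
      ≤ (n:ℝ)⁻¹ * ((E.card:ℝ))⁻¹ * (E.card * (2 * n / k)) := by
        apply mul_le_mul_of_nonneg_left hsum (by positivity)
    _ = 2 / k := by field_simp
lemma cube_le_sum_sq (n : ℕ) : n ^ 3 ≤ 4 * ∑ b ∈ Finset.range n, (b + 1) ^ 2 := by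
  induction n with
  | zero => simp
  | succ m ih =>
      rw [Finset.sum_range_succ, Nat.mul_add]
      have h : (m + 1) ^ 3 = m ^ 3 + (3 * m ^ 2 + 3 * m + 1) := by ring
      have h2 : 3 * m ^ 2 + 3 * m + 1 ≤ 4 * (m + 1) ^ 2 := by nlinarith
      omega
lemma row_count (n : ℕ) (a : Fin n) (j : ℕ) :
    (∑ b : Fin n, if (a : ℕ) + j = (b : ℕ) then (1:ℂ) else 0)
      = if (a : ℕ) + j < n then 1 else 0 := by
  by_cases h : (a : ℕ) + j < n
  · rw [if_pos h, Finset.sum_eq_single (⟨(a : ℕ) + j, h⟩ : Fin n)]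
    · rw [if_pos (by simp)]
    · intro b _ hb
      exact if_neg (fun hc => hb (by simp [Fin.ext_iff, ← hc]))
    · simp
  · rw [if_neg h, Finset.sum_eq_zero]
    intro b _
    exact if_neg (by omega)
lemma half_le_pnorm_xseq (c : ℕ → ℝ) (n : ℕ) (hn : 1 ≤ n) :
    (1:ℝ) / 2 ≤ pnorm c n (xseq n) := by
  have hnR : (0:ℝ) < (n:ℝ) := by exact_mod_cast hn
  set v : EuclideanSpace ℂ (Fin n) := WithLp.toLp 2 (fun _ => 1) with hv
  have hvnorm : ‖v‖ = Real.sqrt n := by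
    rw [EuclideanSpace.norm_eq]
    congr 1
    simp [hv]
  -- the applied vector
  set T := LinearMap.toContinuousLinearMap (Matrix.toEuclideanLin (xseq n)) with hT
  have hw : ∀ a : Fin n, (T v) a = ((n:ℂ))⁻¹ * ((n - (a : ℕ) : ℕ) : ℂ) := by
    intro a
    have h0 : (T v) a = ∑ b, (xseq n) a b * v b := rfl
    rw [h0]
    have h1 : ∀ b : Fin n, (xseq n) a b * v b
        = ((n:ℂ))⁻¹ * ∑ j ∈ Finset.range n, if (a : ℕ) + j = (b : ℕ) then (1:ℂ) else 0 := by
      intro b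
      simp only [xseq, Matrix.smul_apply, Matrix.sum_apply, Lpow_apply, smul_eq_mul, hv, PiLp.toLp_apply]
      rw [mul_one]
    simp_rw [h1]
    rw [← Finset.mul_sum]
    congr 1
    rw [Finset.sum_comm]
    have h2 : ∀ j ∈ Finset.range n,
        (∑ b : Fin n, if (a : ℕ) + j = (b : ℕ) then (1:ℂ) else 0)
          = if j ∈ Finset.range (n - (a : ℕ)) then (1:ℂ) else 0 := by
      intro j _
      rw [row_count]
      congr 1
      simp only [Finset.mem_range, eq_iff_iff]
      omega
    rw [Finset.sum_congr rfl h2, Finset.sum_ite_mem,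
      Finset.inter_eq_right.mpr (Finset.range_subset_range.mpr (by omega)),
      Finset.sum_const, Finset.card_range, nsmul_eq_mul, mul_one]
  have hwnorm : Real.sqrt n / 2 ≤ ‖T v‖ := by
    rw [EuclideanSpace.norm_eq]
    have hterm : ∀ a : Fin n, ‖(T v) a‖ ^ 2 = (((n - (a:ℕ) : ℕ) : ℝ) / n) ^ 2 := by
      intro a
      rw [hw a, norm_mul, norm_inv, Complex.norm_natCast, Complex.norm_natCast]
      rw [div_pow, mul_pow, inv_pow]
      ring
    rw [Fintype.sum_congr _ _ hterm]
    -- lower bound the sum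
    have hsum : (n:ℝ) / 4 ≤ ∑ a : Fin n, (((n - (a:ℕ) : ℕ) : ℝ) / n) ^ 2 := by
      have hnat : (n:ℝ) ^ 3 ≤ 4 * ∑ a ∈ Finset.range n, (((n - a : ℕ) : ℝ)) ^ 2 := by
        have e1 : ∑ a ∈ Finset.range n, (((n - a : ℕ) : ℝ)) ^ 2
            = ∑ a ∈ Finset.range n, (((a + 1 : ℕ) : ℝ)) ^ 2 := by
          rw [← Finset.sum_range_reflect]
          refine Finset.sum_congr rfl fun j hj => ?_
          have : j < n := Finset.mem_range.mp hj
          congr 2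
          omega
        rw [e1]
        have := cube_le_sum_sq n
        calc ((n:ℝ)) ^ 3 = ((n ^ 3 : ℕ) : ℝ) := by push_cast; ring
          _ ≤ ((4 * ∑ b ∈ Finset.range n, (b + 1) ^ 2 : ℕ) : ℝ) := by exact_mod_cast this
          _ = 4 * ∑ a ∈ Finset.range n, (((a + 1 : ℕ) : ℝ)) ^ 2 := by push_cast; ring
      have e2 : ∑ a : Fin n, (((n - (a:ℕ) : ℕ) : ℝ) / n) ^ 2
          = (∑ a ∈ Finset.range n, (((n - a : ℕ) : ℝ)) ^ 2) / n ^ 2 := by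
        rw [Finset.sum_div, ← Finset.sum_range fun a => (((n - a : ℕ) : ℝ) / n) ^ 2]
        · refine Finset.sum_congr rfl fun a _ => ?_
          rw [div_pow]
      rw [e2]
      rw [le_div_iff₀ (by positivity)]
      nlinarith
    calc Real.sqrt n / 2 = Real.sqrt ((n:ℝ) / 4) := by
          rw [show (n:ℝ)/4 = n * (1/2)^2 by ring, Real.sqrt_mul (le_of_lt hnR),
            Real.sqrt_sq (by norm_num)]
          ring
      _ ≤ _ := Real.sqrt_le_sqrt hsum
  have hle : ‖T v‖ ≤ opNorm (xseq n) * ‖v‖ := T.le_opNorm v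
  have hvpos : (0:ℝ) < ‖v‖ := by
    rw [hvnorm]
    positivity
  have : (1:ℝ)/2 ≤ opNorm (xseq n) := by
    rw [hvnorm] at hle hvpos
    have := le_trans hwnorm hle
    rw [div_le_iff₀ (by positivity : (0:ℝ) < 2)] at this
    nlinarith [Real.sq_sqrt (le_of_lt hnR), Real.sqrt_nonneg (n:ℝ)]
  exact le_trans this (le_max_left _ _)
lemma memA_mask (c : ℕ → ℝ) (hone : ∀ n, 1 < c n) (s : ℕ → Bool) :
    memA c (fun n => if s (n - 1) then xseq n else 0) := by
  constructor
  · refine ⟨1, fun n => ?_⟩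
    by_cases hs : s (n - 1) = true
    · simp only [hs, if_true]
      exact pnorm_xseq_le c hone n
    · simp only [hs, Bool.false_eq_true, if_false]
      rw [pnorm_zero]; exact zero_le_one
  · intro ε hε
    refine ⟨max 2 ⌈4 / ε⌉₊, fun k hk n => ?_⟩
    have hk2 : 2 ≤ k := le_trans (le_max_left _ _) hk
    have hkc : (4:ℝ) / ε ≤ k := by
      refine le_trans (Nat.le_ceil _) ?_
      exact_mod_cast le_trans (le_max_right 2 ⌈4 / ε⌉₊) hk
    have hkR : (0:ℝ) < k := by positivity
    have h4k : 4 / (k:ℝ) ≤ ε := by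
      rw [div_le_iff₀ hkR]
      rw [div_le_iff₀ hε] at hkc
      linarith
    by_cases hs : s (n - 1) = true
    · simp only [hs, if_true]
      by_cases hkn : k ≤ n
      · have e1 := key_est c hone hk2 hkn
        have e2 : pnorm c n (umat n k * xseq n - xseq n) ≤ 2 / k := by
          rw [xseq_umat_comm]
          exact e1
        calc pnorm c n (xseq n * umat n k - xseq n)
              + pnorm c n (umat n k * xseq n - xseq n) ≤ 2 / k + 2 / k := add_le_add e1 e2
          _ = 4 / k := by ring
          _ ≤ ε := h4k
      · rw [umat, if_neg hkn, mul_one, one_mul, sub_self, pnorm_zero, add_zero]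
        exact le_trans (le_of_eq rfl) (by linarith)
    · simp only [hs, Bool.false_eq_true, if_false]
      rw [zero_mul, mul_zero, sub_zero, pnorm_zero, add_zero]
      linarith

/-- The set `A`, with the metric `d(S,T) = sup_n p_n(S_n − T_n)`, is not
separable: it contains no countable dense subset. -/
theorem stmt7 (c : ℕ → ℝ) (hmono : StrictMono c) (hone : ∀ n, 1 < c n)
    (hunbdd : ∀ M : ℝ, ∃ n, M < c n) :
    ¬ ∃ D : Set (∀ n, Matrix (Fin n) (Fin n) ℂ),
        D.Countable ∧ (∀ T ∈ D, memA c T) ∧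
        ∀ T, memA c T → ∀ ε : ℝ, 0 < ε → ∃ S ∈ D, ∀ n, pnorm c n (S n - T n) ≤ ε := by
  rintro ⟨D, hDc, hDA, hdense⟩
  classical
  set G : (ℕ → Bool) → (∀ n, Matrix (Fin n) (Fin n) ℂ) :=
    fun s n => if s (n - 1) then xseq n else 0 with hG
  have hmem : ∀ s, memA c (G s) := fun s => memA_mask c hone s
  have h8 : (0:ℝ) < 1/8 := by norm_num
  choose f hfD hf using fun s => hdense (G s) (hmem s) (1/8) h8
  have hinj : Function.Injective f := by
    intro s t hst
    by_contra hne
    obtain ⟨m, hm⟩ := Function.ne_iff.mp hne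
    set n := m + 1 with hn
    have hsep : (1:ℝ)/2 ≤ pnorm c n (G s n - G t n) := by
      have hm1 : n - 1 = m := by omega
      have hx := half_le_pnorm_xseq c n (by omega)
      simp only [hG, hm1]
      rcases Bool.eq_false_or_eq_true (s m) with h1 | h1 <;>
        rcases Bool.eq_false_or_eq_true (t m) with h2 | h2
      · exact absurd (h1.trans h2.symm) hm
      · rw [h1, h2]
        simp only [Bool.false_eq_true, if_false, if_true, zero_sub, sub_zero, pnorm_neg]
        exact hx
      · rw [h1, h2]
        simp only [Bool.false_eq_true, if_false, if_true, zero_sub, sub_zero, pnorm_neg]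
        exact hx
      · exact absurd (h1.trans h2.symm) hm
    have htri : pnorm c n (G s n - G t n)
        ≤ pnorm c n (G s n - f s n) + pnorm c n (f s n - G t n) :=
      pnorm_sub_triangle c n _ _ _
    have h1 : pnorm c n (G s n - f s n) ≤ 1/8 := by
      rw [pnorm_sub_comm]; exact hf s n
    have h2 : pnorm c n (f s n - G t n) ≤ 1/8 := by
      rw [hst]; exact hf t n
    linarith
  -- now contradiction with countability
  have hcnt : Countable ↥D := hDc.to_subtype
  have hinj2 : Function.Injective (fun S : Set ℕ => (⟨f (fun n => decide (n ∈ S)), hfD _⟩ : ↥D)) := by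
    intro S T hST
    have := hinj (Subtype.mk_eq_mk.mp hST)
    ext x
    have hx := congrFun this x
    simpa using hx
  obtain ⟨g, hg⟩ := (Countable.exists_injective_nat ↥D)
  exact Function.cantor_injective _ (hg.comp hinj2)

end
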